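/- arXiv:2503.02353 — 2 statements merged into one kernel-verified Lean document; each statement's English description precedes it below -/
import Mathlib

section
/- (Lemma 1, scalar form.) Let T ≥ 1, let α : ℕ → ℝ satisfy 0 < α n < 1 for all n, let σ > 0 and μ, x₀ ∈ ℝ. Define ᾱ_t := ∏_{i=1}^{t} α i and η_t := 1 + Σ_{m=1}^{t-1} √(∏_{n=m+1}^{t} α n) (so η_1 = 1). Let ε_1, …, ε_T be independent real random variables each with law gaussianReal 0 1, and define recursively X_0 = x₀ and X_t = √(α t) · X_{t−1} + √(1 − α t) · σ · ε_t + μ/η_T for 1 ≤ t ≤ T. Then for every t with 1 ≤ t ≤ T, the law of X_t equals gaussianReal (√(ᾱ_t) · x₀ + (η_t/η_T) · μ) ((1 − ᾱ_t) · σ²). -/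
open MeasureTheory ProbabilityTheory Finset

/-- `ᾱ t = ∏_{i=1}^{t} α i`. -/
noncomputable def alphaBar (α : ℕ → ℝ) (t : ℕ) : ℝ := ∏ i ∈ Finset.Icc 1 t, α i

/-- `η t = 1 + ∑_{m=1}^{t-1} √(∏_{n=m+1}^{t} α n)` (so `η 1 = 1`). -/
noncomputable def eta (α : ℕ → ℝ) (t : ℕ) : ℝ :=
  1 + ∑ m ∈ Finset.Icc 1 (t - 1), Real.sqrt (∏ n ∈ Finset.Icc (m + 1) t, α n)

open scoped NNReal

/-!
Each step adds to an affine image of the previous state a Gaussian innovation that is independent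
of it (the state is a function of the earlier innovations only), so every `X t` is Gaussian, with
mean `m t = √(α t) m (t - 1) + μ / η T` and variance `v t = α t v (t - 1) + (1 - α t) σ²`.
Since `ᾱ t = ᾱ (t - 1) α t` and `η t = √(α t) η (t - 1) + 1` for `t ≥ 2`, the closed forms solve
these recursions from `t = 1` on.
-/

namespace ProbabilityTheory

variable {Ω : Type*}

section

variable [MeasurableSpace Ω] {P : Measure Ω}

lemma iIndepFun.indepFun_of_measurable_iSup {ι β γ : Type*} [MeasurableSpace β]
    [MeasurableSpace γ] {ε : ι → Ω → β} (hε : iIndepFun ε P) (hmeas : ∀ i, Measurable (ε i))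
    {S : Set ι} {k : ι} (hk : k ∉ S) {Y : Ω → γ}
    (hY : Measurable[⨆ i ∈ S, MeasurableSpace.comap (ε i) inferInstance] Y) :
    IndepFun Y (ε k) P := by
  have hindep := indep_iSup_of_disjoint (fun i => (hmeas i).comap_le)
    ((iIndepFun_iff_iIndep _ _ _).1 hε) (Set.disjoint_singleton_right.2 hk)
  rw [_root_.iSup_singleton] at hindep
  exact (IndepFun_iff_Indep _ _ _).2 (indep_of_indep_of_le_left hindep hY.comap_le)

lemma IndepFun.hasLaw_affine_gaussianReal {Y Z : Ω → ℝ} {m₁ m₂ : ℝ} {v₁ v₂ : ℝ≥0}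
    (hYZ : IndepFun Y Z P) (hY : HasLaw Y (gaussianReal m₁ v₁) P)
    (hZ : HasLaw Z (gaussianReal m₂ v₂) P) (a b c : ℝ) :
    HasLaw (fun ω => a * Y ω + b * Z ω + c)
      (gaussianReal (a * m₁ + b * m₂ + c)
        ((a ^ 2).toNNReal * v₁ + (b ^ 2).toNNReal * v₂)) P := by
  have hsum := (hYZ.comp (measurable_const_mul a) (measurable_const_mul b)).hasLaw_fun_add
    (gaussianReal_const_mul hY a) (gaussianReal_const_mul hZ b)
  rw [gaussianReal_conv_gaussianReal] at hsum
  rw [Real.toNNReal_of_nonneg (sq_nonneg a), Real.toNNReal_of_nonneg (sq_nonneg b)]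
  exact gaussianReal_add_const hsum c

end

/- Mean and variance of `X t` for `X (t + 1) = a (t + 1) * X t + b (t + 1) * ε (t + 1) + c (t + 1)`,
`X 0 = x₀`, with independent standard Gaussian innovations `ε`. -/
noncomputable def affineRecMean (a c : ℕ → ℝ) (x₀ : ℝ) : ℕ → ℝ
  | 0 => x₀
  | t + 1 => a (t + 1) * affineRecMean a c x₀ t + c (t + 1)

noncomputable def affineRecVar (a b : ℕ → ℝ) : ℕ → ℝ≥0
  | 0 => 0
  | t + 1 => (a (t + 1) ^ 2).toNNReal * affineRecVar a b t + (b (t + 1) ^ 2).toNNReal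

section AffineRecursion

variable {T : ℕ} {a b c : ℕ → ℝ} {x₀ : ℝ} {ε X : ℕ → Ω → ℝ}

lemma measurable_iSup_of_affine_recursion (hX0 : X 0 = fun _ => x₀)
    (hXrec : ∀ t < T, X (t + 1) = fun ω => a (t + 1) * X t ω + b (t + 1) * ε (t + 1) ω + c (t + 1))
    {t : ℕ} (ht : t ≤ T) :
    Measurable[⨆ i ∈ Set.Iic t, MeasurableSpace.comap (ε i) inferInstance] (X t) := by
  induction t with
  | zero => rw [hX0]; exact measurable_const
  | succ t ih =>
    have hpast : Measurable[⨆ i ∈ Set.Iic (t + 1), MeasurableSpace.comap (ε i) inferInstance]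
        (X t) :=
      (ih (by omega)).mono (biSup_mono fun i hi => Set.mem_Iic.2 (Nat.le_succ_of_le hi)) le_rfl
    have hnew : Measurable[⨆ i ∈ Set.Iic (t + 1), MeasurableSpace.comap (ε i) inferInstance]
        (ε (t + 1)) :=
      (comap_measurable (ε (t + 1))).mono
        (le_iSup₂_of_le (t + 1) (Set.mem_Iic.2 le_rfl) le_rfl) le_rfl
    rw [hXrec t (by omega)]
    exact ((hpast.const_mul _).add (hnew.const_mul _)).add_const _

variable [MeasurableSpace Ω] {P : Measure Ω}

lemma hasLaw_affine_recursion [IsProbabilityMeasure P] (hεmeas : ∀ t, Measurable (ε t))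
    (hεindep : iIndepFun ε P) (hεlaw : ∀ t, HasLaw (ε t) (gaussianReal 0 1) P)
    (hX0 : X 0 = fun _ => x₀)
    (hXrec : ∀ t < T, X (t + 1) = fun ω => a (t + 1) * X t ω + b (t + 1) * ε (t + 1) ω + c (t + 1))
    {t : ℕ} (ht : t ≤ T) :
    HasLaw (X t) (gaussianReal (affineRecMean a c x₀ t) (affineRecVar a b t)) P := by
  induction t with
  | zero =>
    rw [hX0, affineRecMean, affineRecVar, gaussianReal_zero_var]
    exact hasLaw_dirac_of_ae_eq (ae_of_all _ fun _ => rfl)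
  | succ t ih =>
    have hindep : IndepFun (X t) (ε (t + 1)) P :=
      hεindep.indepFun_of_measurable_iSup hεmeas (by simp)
        (measurable_iSup_of_affine_recursion hX0 hXrec (by omega))
    have hstep := hindep.hasLaw_affine_gaussianReal (ih (by omega)) (hεlaw (t + 1))
      (a (t + 1)) (b (t + 1)) (c (t + 1))
    rw [hXrec t (by omega)]
    rwa [mul_zero, add_zero, mul_one] at hstep

end AffineRecursion

end ProbabilityTheory

lemma alphaBar_one (α : ℕ → ℝ) : alphaBar α 1 = α 1 := by
  simp [alphaBar]

lemma alphaBar_succ (α : ℕ → ℝ) (t : ℕ) : alphaBar α (t + 1) = alphaBar α t * α (t + 1) :=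
  prod_Icc_succ_top (by omega) _

lemma eta_one (α : ℕ → ℝ) : eta α 1 = 1 := by
  simp [eta]

lemma eta_succ {α : ℕ → ℝ} (hα : ∀ n, 0 ≤ α n) {t : ℕ} (ht : 1 ≤ t) :
    eta α (t + 1) = √(α (t + 1)) * eta α t + 1 := by
  obtain ⟨k, rfl⟩ := Nat.exists_eq_add_of_le' ht
  have hfactor : ∀ m ∈ Icc 1 k, √(∏ n ∈ Icc (m + 1) (k + 2), α n)
      = √(α (k + 2)) * √(∏ n ∈ Icc (m + 1) (k + 1), α n) := fun m hm => by
    rw [prod_Icc_succ_top (by grind), Real.sqrt_mul' _ (hα _), mul_comm]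
  simp only [eta, Nat.add_sub_cancel]
  rw [sum_Icc_succ_top (by omega), sum_congr rfl hfactor, ← mul_sum, Icc_self, prod_singleton]
  ring

lemma affineRecMean_sqrt_const {α : ℕ → ℝ} (hα : ∀ n, 0 ≤ α n) (c x₀ : ℝ) {t : ℕ} (ht : 1 ≤ t) :
    affineRecMean (fun n => √(α n)) (fun _ => c) x₀ t = √(alphaBar α t) * x₀ + eta α t * c := by
  induction t, ht using Nat.le_induction with
  | base => simp [affineRecMean, alphaBar_one, eta_one]
  | succ t ht ih =>
    rw [affineRecMean, ih, eta_succ hα ht, alphaBar_succ, Real.sqrt_mul' _ (hα _)]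
    ring

lemma affineRecVar_sqrt {α : ℕ → ℝ} (hα : ∀ n, 0 ≤ α n ∧ α n ≤ 1) (σ : ℝ) (t : ℕ) :
    (affineRecVar (fun n => √(α n)) (fun n => √(1 - α n) * σ) t : ℝ)
      = (1 - alphaBar α t) * σ ^ 2 := by
  induction t with
  | zero => simp [affineRecVar, alphaBar]
  | succ t ih =>
    have hα₀ := (hα (t + 1)).1
    have hα₁ : 0 ≤ 1 - α (t + 1) := sub_nonneg.2 (hα (t + 1)).2
    rw [affineRecVar, NNReal.coe_add, NNReal.coe_mul, ih, Real.coe_toNNReal _ (sq_nonneg _),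
      Real.coe_toNNReal _ (sq_nonneg _), mul_pow, Real.sq_sqrt hα₀, Real.sq_sqrt hα₁, alphaBar_succ]
    ring

theorem modified_forward_marginal_general
    {Ω : Type*} [MeasurableSpace Ω] (P : Measure Ω) [IsProbabilityMeasure P]
    (T : ℕ)
    (α : ℕ → ℝ) (hα : ∀ n, 0 < α n ∧ α n < 1)
    (σ : ℝ) (μ x₀ : ℝ)
    (ε : ℕ → Ω → ℝ) (hεmeas : ∀ t, Measurable (ε t))
    (hεindep : iIndepFun ε P)
    (hεlaw : ∀ t, Measure.map (ε t) P = gaussianReal 0 1)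
    (X : ℕ → Ω → ℝ)
    (hX0 : X 0 = fun _ => x₀)
    (hXrec : ∀ t, 1 ≤ t → t ≤ T → X t = fun ω =>
      Real.sqrt (α t) * X (t - 1) ω + Real.sqrt (1 - α t) * σ * ε t ω + μ / eta α T) :
    ∀ t, 1 ≤ t → t ≤ T →
      Measure.map (X t) P
        = gaussianReal (Real.sqrt (alphaBar α t) * x₀ + (eta α t / eta α T) * μ)
            (((1 - alphaBar α t) * σ ^ 2).toNNReal) := by
  intro t ht htT
  have hα01 : ∀ n, 0 ≤ α n ∧ α n ≤ 1 := fun n => ⟨(hα n).1.le, (hα n).2.le⟩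
  have hlaw := hasLaw_affine_recursion (P := P) (T := T) (a := fun n => √(α n))
    (b := fun n => √(1 - α n) * σ) (c := fun _ => μ / eta α T)
    hεmeas hεindep (fun t => ⟨(hεmeas t).aemeasurable, hεlaw t⟩) hX0
    (fun t ht => hXrec (t + 1) (by omega) ht) htT
  rw [hlaw.map_eq, affineRecMean_sqrt_const (fun n => (hα01 n).1) _ _ ht, ← affineRecVar_sqrt hα01,
    Real.toNNReal_coe, div_mul_eq_mul_div, mul_div_assoc]

/-- Lemma 1 (scalar form): the closed-form marginal of the modified forward
diffusion process `X t = √(α t) · X (t-1) + √(1 − α t) · σ · ε t + μ / η T`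
started at `X 0 = x₀` is `N(√(ᾱ t) · x₀ + (η t / η T) · μ, (1 − ᾱ t) · σ²)`. -/
theorem modified_forward_marginal
    {Ω : Type*} [MeasurableSpace Ω] (P : Measure Ω) [IsProbabilityMeasure P]
    (T : ℕ) (hT : 1 ≤ T)
    (α : ℕ → ℝ) (hα : ∀ n, 0 < α n ∧ α n < 1)
    (σ : ℝ) (hσ : 0 < σ) (μ x₀ : ℝ)
    (ε : ℕ → Ω → ℝ) (hεmeas : ∀ t, Measurable (ε t))
    (hεindep : iIndepFun ε P)
    (hεlaw : ∀ t, Measure.map (ε t) P = gaussianReal 0 1)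
    (X : ℕ → Ω → ℝ)
    (hX0 : X 0 = fun _ => x₀)
    (hXrec : ∀ t, 1 ≤ t → t ≤ T → X t = fun ω =>
      Real.sqrt (α t) * X (t - 1) ω + Real.sqrt (1 - α t) * σ * ε t ω + μ / eta α T) :
    ∀ t, 1 ≤ t → t ≤ T →
      Measure.map (X t) P
        = gaussianReal (Real.sqrt (alphaBar α t) * x₀ + (eta α t / eta α T) * μ)
            (((1 - alphaBar α t) * σ ^ 2).toNNReal) :=
  modified_forward_marginal_general P T α hα σ μ x₀ ε hεmeas hεindep hεlaw X hX0 hXrec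
end

section
/- (Lemma 2, Bayes density identity.) Let σ > 0, let α_t, ᾱ_{t−1} be real numbers with 0 < α_t < 1 and 0 < ᾱ_{t−1} < 1, set ᾱ_t := α_t · ᾱ_{t−1}, let η_{t−1} > 0, η_T > 0 and set η_t := 1 + √(α_t) · η_{t−1}. Define β̃ := ((1−ᾱ_{t−1})/(1−ᾱ_t)) · (1−α_t) · σ² and, for x_t, x₀ ∈ ℝ, μ̃(x_t, x₀) := (√(α_t)(1−ᾱ_{t−1})/(1−ᾱ_t)) · x_t + (√(ᾱ_{t−1})(1−α_t)/(1−ᾱ_t)) · x₀ + ((η_{t−1}(1−α_t) − √(α_t)(1−ᾱ_{t−1}))/((1−ᾱ_t) η_T)) · μ. Then for all x_{t−1}, x_t, x₀ ∈ ℝ: gaussianPDFReal (√(α_t)·x_{t−1} + μ/η_T) ((1−α_t)σ²) x_t · gaussianPDFReal (√(ᾱ_{t−1})·x₀ + (η_{t−1}/η_T)·μ) ((1−ᾱ_{t−1})σ²) x_{t−1} / gaussianPDFReal (√(ᾱ_t)·x₀ + (η_t/η_T)·μ) ((1−ᾱ_t)σ²) x_t = gaussianPDFReal (μ̃(x_t,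 x₀)) β̃ x_{t−1}. -/
/-!
The forward step `x ↦ √α_t · x + μ/η_T` is a linear Gaussian model, so the claim is Bayes'
theorem for such a model: if `y ~ N(m, v₂)` and `x | y ~ N(a y + b, v₁)`, then `x ~ N(a m + b, v₁ + a² v₂)`
and `y | x ~ N((v₁ m + a v₂ (x - b)) / (v₁ + a² v₂), v₁ v₂ / (v₁ + a² v₂))`. Pointwise this is an
identity of Gaussian densities, obtained by completing the square in `y`. The diffusion parameters fit
this pattern with `a = √α_t`, `v₁ = (1 - α_t)σ²`, `v₂ = (1 - ᾱ_{t-1})σ²`, since `v₁ + α_t v₂ = (1 - ᾱ_t)σ²`.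
-/

open ProbabilityTheory Real

lemma gaussianPDFReal_toNNReal {v : ℝ} (hv : 0 ≤ v) (m x : ℝ) :
    gaussianPDFReal m v.toNNReal x = (√(2 * π * v))⁻¹ * rexp (-(x - m) ^ 2 / (2 * v)) := by
  rw [gaussianPDFReal, coe_toNNReal v hv]

lemma gaussianPDFReal_mul_gaussianPDFReal_div_marginal {v₁ v₂ : ℝ} (hv₁ : 0 < v₁) (hv₂ : 0 < v₂)
    (a b m x y : ℝ) :
    gaussianPDFReal (a * y + b) v₁.toNNReal x * gaussianPDFReal m v₂.toNNReal y
        / gaussianPDFReal (a * m + b) (v₁ + a ^ 2 * v₂).toNNReal x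
      = gaussianPDFReal ((v₁ * m + a * v₂ * (x - b)) / (v₁ + a ^ 2 * v₂))
          (v₁ * v₂ / (v₁ + a ^ 2 * v₂)).toNNReal y := by
  have hv : 0 < v₁ + a ^ 2 * v₂ := by positivity
  simp only [gaussianPDFReal_toNNReal, hv₁.le, hv₂.le, hv.le,
    (by positivity : 0 ≤ v₁ * v₂ / (v₁ + a ^ 2 * v₂))]
  have hnorm : (√(2 * π * v₁))⁻¹ * (√(2 * π * v₂))⁻¹ / (√(2 * π * (v₁ + a ^ 2 * v₂)))⁻¹
      = (√(2 * π * (v₁ * v₂ / (v₁ + a ^ 2 * v₂))))⁻¹ := by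
    have hvar : 2 * π * v₁ * (2 * π * v₂)
        = 2 * π * (v₁ + a ^ 2 * v₂) * (2 * π * (v₁ * v₂ / (v₁ + a ^ 2 * v₂))) := by
      field_simp
    rw [← mul_inv, ← sqrt_mul (by positivity), hvar, sqrt_mul (by positivity), mul_inv,
      mul_div_cancel_left₀ _ (by positivity)]
  have hsquare : -(x - (a * y + b)) ^ 2 / (2 * v₁) + -(y - m) ^ 2 / (2 * v₂)
        - -(x - (a * m + b)) ^ 2 / (2 * (v₁ + a ^ 2 * v₂))
      = -(y - (v₁ * m + a * v₂ * (x - b)) / (v₁ + a ^ 2 * v₂)) ^ 2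
          / (2 * (v₁ * v₂ / (v₁ + a ^ 2 * v₂))) := by
    field_simp
    ring
  rw [← hnorm, ← hsquare, exp_sub, exp_add]
  field_simp

theorem reverse_conditional_density_general
    (σ : ℝ) (hσ : 0 < σ)
    (αt αbar' : ℝ) (hαt0 : 0 < αt) (hαt1 : αt < 1) (hαbar'1 : αbar' < 1)
    (ηprev ηT : ℝ) (hηT : 0 < ηT)
    (μ : ℝ) :
    let αbar : ℝ := αt * αbar'
    let ηt : ℝ := 1 + Real.sqrt αt * ηprev
    let βtilde : ℝ := ((1 - αbar') / (1 - αbar)) * (1 - αt) * σ ^ 2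
    ∀ xprev xt x₀ : ℝ,
      gaussianPDFReal (Real.sqrt αt * xprev + μ / ηT) (((1 - αt) * σ ^ 2).toNNReal) xt
        * gaussianPDFReal (Real.sqrt αbar' * x₀ + (ηprev / ηT) * μ)
            (((1 - αbar') * σ ^ 2).toNNReal) xprev
        / gaussianPDFReal (Real.sqrt αbar * x₀ + (ηt / ηT) * μ)
            (((1 - αbar) * σ ^ 2).toNNReal) xt
      = gaussianPDFReal
          ((Real.sqrt αt * (1 - αbar') / (1 - αbar)) * xt
            + (Real.sqrt αbar' * (1 - αt) / (1 - αbar)) * x₀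
            + ((ηprev * (1 - αt) - Real.sqrt αt * (1 - αbar')) / ((1 - αbar) * ηT)) * μ)
          βtilde.toNNReal xprev := by
  intro αbar ηt βtilde xprev xt x₀
  have hαbar : 0 < 1 - αbar := by nlinarith
  have hmarginal_var : (1 - αbar) * σ ^ 2 = (1 - αt) * σ ^ 2 + √αt ^ 2 * ((1 - αbar') * σ ^ 2) := by
    rw [sq_sqrt hαt0.le]; ring
  have hmarginal_mean : √αbar * x₀ + ηt / ηT * μ
      = √αt * (√αbar' * x₀ + ηprev / ηT * μ) + μ / ηT := by
    rw [sqrt_mul hαt0.le]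
    field_simp
    ring
  have hposterior_var : βtilde = (1 - αt) * σ ^ 2 * ((1 - αbar') * σ ^ 2)
      / ((1 - αt) * σ ^ 2 + √αt ^ 2 * ((1 - αbar') * σ ^ 2)) := by
    simp only [βtilde]
    rw [← hmarginal_var]
    field_simp
  have hposterior_mean : (√αt * (1 - αbar') / (1 - αbar)) * xt
        + (√αbar' * (1 - αt) / (1 - αbar)) * x₀
        + ((ηprev * (1 - αt) - √αt * (1 - αbar')) / ((1 - αbar) * ηT)) * μ
      = ((1 - αt) * σ ^ 2 * (√αbar' * x₀ + ηprev / ηT * μ)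
          + √αt * ((1 - αbar') * σ ^ 2) * (xt - μ / ηT))
        / ((1 - αt) * σ ^ 2 + √αt ^ 2 * ((1 - αbar') * σ ^ 2)) := by
    rw [← hmarginal_var]
    field_simp
    ring
  rw [hmarginal_var, hmarginal_mean, hposterior_var, hposterior_mean]
  exact gaussianPDFReal_mul_gaussianPDFReal_div_marginal (mul_pos (by linarith) (by positivity))
    (mul_pos (by linarith) (by positivity)) _ _ _ _ _

/-- Lemma 2 (Bayes density identity): the reverse conditional density
`q(x_t | x_{t−1}) · q(x_{t−1} | x₀) / q(x_t | x₀)` of the modified forward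
process equals the Gaussian density with mean `μ̃(x_t, x₀)` and variance `β̃`. -/
theorem reverse_conditional_density
    (σ : ℝ) (hσ : 0 < σ)
    (αt αbar' : ℝ) (hαt0 : 0 < αt) (hαt1 : αt < 1) (hαbar'0 : 0 < αbar') (hαbar'1 : αbar' < 1)
    (ηprev ηT : ℝ) (hηprev : 0 < ηprev) (hηT : 0 < ηT)
    (μ : ℝ) :
    let αbar : ℝ := αt * αbar'
    let ηt : ℝ := 1 + Real.sqrt αt * ηprev
    let βtilde : ℝ := ((1 - αbar') / (1 - αbar)) * (1 - αt) * σ ^ 2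
    ∀ xprev xt x₀ : ℝ,
      gaussianPDFReal (Real.sqrt αt * xprev + μ / ηT) (((1 - αt) * σ ^ 2).toNNReal) xt
        * gaussianPDFReal (Real.sqrt αbar' * x₀ + (ηprev / ηT) * μ)
            (((1 - αbar') * σ ^ 2).toNNReal) xprev
        / gaussianPDFReal (Real.sqrt αbar * x₀ + (ηt / ηT) * μ)
            (((1 - αbar) * σ ^ 2).toNNReal) xt
      = gaussianPDFReal
          ((Real.sqrt αt * (1 - αbar') / (1 - αbar)) * xt
            + (Real.sqrt αbar' * (1 - αt) / (1 - αbar)) * x₀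
            + ((ηprev * (1 - αt) - Real.sqrt αt * (1 - αbar')) / ((1 - αbar) * ηT)) * μ)
          βtilde.toNNReal xprev :=
  reverse_conditional_density_general σ hσ αt αbar' hαt0 hαt1 hαbar'1 ηprev ηT hηT μ
end
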